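/- arXiv:1512.02584 — 6 statements merged into one kernel-verified Lean document; each statement's English description precedes it below -/
import Mathlib

section
/- Let m, n ≥ 1, let κ^i_{aj} : ℝ^m → ℝ be smooth, let Γ^c_{ab} : ℝ^m → ℝ be smooth with Γ^c_{ab} = Γ^c_{ba}, and let κ be the linear connection with components κ^i_a(x,y) := Σ_j κ^i_{aj}(x) y^j. Then the composition κ′ := s_Γ ∘ Jκ (with Jκ and s_Γ as in the coordinate prolongation construction) has components (κ′_a)^i(x,y,z) = Σ_j κ^i_{aj}(x) y^j and (κ′_a)^i_b(x,y,z) = Σ_j ∂_b κ^i_{aj}(x) y^j + Σ_j z^j_b κ^i_{aj}(x) + Σ_c Γ^c_{ab}(x)(Σ_j κ^i_{cj}(x) y^j − z^i_c), and in particular each component of κ′ over the base point x is a linear function of the pair (y, z) jointly. -/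
noncomputable section

/-- Points of the double-jet coordinate space: tuples `(x, y, ȳ, z, w)` with entry conventions
`z a i = z^i_a`, `w a b i = w^i_{ab}`. -/
abbrev DblJet (m n : ℕ) :=
  (Fin m → ℝ) × (Fin n → ℝ) × (Fin m → Fin n → ℝ) × (Fin m → Fin n → ℝ) ×
    (Fin m → Fin m → Fin n → ℝ)

/-- `∂_{x^b} κ^i_a (x, y)`. -/
def pdx {m n : ℕ} (κ : (Fin m → ℝ) → (Fin n → ℝ) → Fin m → Fin n → ℝ)
    (b : Fin m) (x : Fin m → ℝ) (y : Fin n → ℝ) (a : Fin m) (i : Fin n) : ℝ :=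
  fderiv ℝ (fun x' => κ x' y a i) x (Pi.single b 1)

/-- `∂_{y^j} κ^i_a (x, y)`. -/
def pdy {m n : ℕ} (κ : (Fin m → ℝ) → (Fin n → ℝ) → Fin m → Fin n → ℝ)
    (j : Fin n) (x : Fin m → ℝ) (y : Fin n → ℝ) (a : Fin m) (i : Fin n) : ℝ :=
  fderiv ℝ (fun y' => κ x y' a i) y (Pi.single j 1)

/-- The jet prolongation `Jκ (x, y, z) = (x, y, κ(x,y), z, w)` with
`w^i_{ab} = ∂_{x^b} κ^i_a + Σ_j z^j_b ∂_{y^j} κ^i_a`. -/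
def jetProl {m n : ℕ} (κ : (Fin m → ℝ) → (Fin n → ℝ) → Fin m → Fin n → ℝ)
    (p : (Fin m → ℝ) × (Fin n → ℝ) × (Fin m → Fin n → ℝ)) : DblJet m n :=
  (p.1, p.2.1, (fun a i => κ p.1 p.2.1 a i), p.2.2,
    fun a b i => pdx κ b p.1 p.2.1 a i + ∑ j, p.2.2 b j * pdy κ j p.1 p.2.1 a i)

/-- The involution `s_Γ (x, y, ȳ, z, w) = (x, y, z, ȳ, w′)` with
`w′^i_{ab} = w^i_{ba} + Σ_c Γ^c_{ba}(x) (ȳ^i_c − z^i_c)`; here `Γ x c a b = Γ^c_{ab}(x)`. -/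
def invol {m n : ℕ} (Γ : (Fin m → ℝ) → Fin m → Fin m → Fin m → ℝ)
    (q : DblJet m n) : DblJet m n :=
  (q.1, q.2.1, q.2.2.2.1, q.2.2.1,
    fun a b i => q.2.2.2.2 b a i + ∑ c, Γ q.1 c b a * (q.2.2.1 c i - q.2.2.2.1 c i))

/-- `∂_b κ^i_{aj}(x)` for the coefficients `K x a i j = κ^i_{aj}(x)` of a linear connection. -/
def pdK {m n : ℕ} (K : (Fin m → ℝ) → Fin m → Fin n → Fin n → ℝ)
    (b : Fin m) (x : Fin m → ℝ) (a : Fin m) (i j : Fin n) : ℝ :=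
  fderiv ℝ (fun x' => K x' a i j) x (Pi.single b 1)

/-- The prolongation `κ′ = s_Γ ∘ Jκ` of a *linear* connection
`κ^i_a(x,y) = Σ_j κ^i_{aj}(x) y^j` by a symmetric base connection `Γ` has components
`(κ′_a)^i = Σ_j κ^i_{aj} y^j` (fourth slot) and
`(κ′_a)^i_b = Σ_j ∂_b κ^i_{aj} y^j + Σ_j z^j_b κ^i_{aj} + Σ_c Γ^c_{ab}(Σ_j κ^i_{cj} y^j − z^i_c)`
(fifth slot, whose entry `(b, a, i)` is the component `(κ′_a)^i_b`); in particular each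
component of `κ′` over the base point `x` is a linear function of the pair `(y, z)` jointly,
i.e. the prolongation of a linear connection is again a linear connection. -/
theorem prolongation_of_linear_connection (m n : ℕ) (hm : 1 ≤ m) (hn : 1 ≤ n)
    (K : (Fin m → ℝ) → Fin m → Fin n → Fin n → ℝ)
    (hK : ∀ a i j, ContDiff ℝ (⊤ : ℕ∞) (fun x => K x a i j))
    (Γ : (Fin m → ℝ) → Fin m → Fin m → Fin m → ℝ)
    (hΓ : ∀ c a b, ContDiff ℝ (⊤ : ℕ∞) (fun x => Γ x c a b))
    (hΓsym : ∀ x c a b, Γ x c a b = Γ x c b a)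
    (κ : (Fin m → ℝ) → (Fin n → ℝ) → Fin m → Fin n → ℝ)
    (hκlin : ∀ x y a i, κ x y a i = ∑ j, K x a i j * y j) :
    (∀ (x : Fin m → ℝ) (y : Fin n → ℝ) (z : Fin m → Fin n → ℝ) (a : Fin m) (i : Fin n),
      (invol Γ (jetProl κ (x, y, z))).2.2.2.1 a i = ∑ j, K x a i j * y j) ∧
    (∀ (x : Fin m → ℝ) (y : Fin n → ℝ) (z : Fin m → Fin n → ℝ) (a b : Fin m) (i : Fin n),
      (invol Γ (jetProl κ (x, y, z))).2.2.2.2 b a i =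
        (∑ j, pdK K b x a i j * y j) + (∑ j, z b j * K x a i j)
          + ∑ c, Γ x c a b * ((∑ j, K x c i j * y j) - z c i)) ∧
    (∀ x : Fin m → ℝ,
      IsLinearMap ℝ (fun p : (Fin n → ℝ) × (Fin m → Fin n → ℝ) =>
        (invol Γ (jetProl κ (x, p.1, p.2))).2)) := by

  have hpdy : ∀ x y a i j, pdy κ j x y a i = K x a i j := by
    intro x y a i j
    unfold pdy
    have hfun : (fun y' => κ x y' a i) = fun y' => ∑ j, K x a i j * y' j :=
      funext fun y' => hκlin x y' a i
    rw [hfun]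
    have h : HasFDerivAt (fun y' : Fin n → ℝ => ∑ j, K x a i j * y' j)
        (∑ j, K x a i j • (ContinuousLinearMap.proj j : (Fin n → ℝ) →L[ℝ] ℝ)) y :=
      HasFDerivAt.fun_sum fun j _ =>
        ((ContinuousLinearMap.proj j : (Fin n → ℝ) →L[ℝ] ℝ).hasFDerivAt).const_mul (K x a i j)
    rw [h.fderiv]
    simp [Pi.single_apply, Finset.sum_ite_eq', mul_ite]
  have hpdx : ∀ x y a i b, pdx κ b x y a i = ∑ j, pdK K b x a i j * y j := by
    intro x y a i b
    unfold pdx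
    have hfun : (fun x' => κ x' y a i) = fun x' => ∑ j, K x' a i j * y j :=
      funext fun x' => hκlin x' y a i
    rw [hfun]
    have h : HasFDerivAt (fun x' : Fin m → ℝ => ∑ j, K x' a i j * y j)
        (∑ j, y j • fderiv ℝ (fun x' => K x' a i j) x) x :=
      HasFDerivAt.fun_sum fun j _ =>
        (((hK a i j).differentiable (by simp) x).hasFDerivAt).mul_const (y j)
    rw [h.fderiv]
    simp [pdK, mul_comm]
  have part1 : ∀ (x : Fin m → ℝ) (y : Fin n → ℝ) (z : Fin m → Fin n → ℝ) (a : Fin m)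
      (i : Fin n), (invol Γ (jetProl κ (x, y, z))).2.2.2.1 a i = ∑ j, K x a i j * y j := by
    intro x y z a i
    simp [invol, jetProl, hκlin]
  have part2 : ∀ (x : Fin m → ℝ) (y : Fin n → ℝ) (z : Fin m → Fin n → ℝ) (a b : Fin m)
      (i : Fin n), (invol Γ (jetProl κ (x, y, z))).2.2.2.2 b a i =
        (∑ j, pdK K b x a i j * y j) + (∑ j, z b j * K x a i j)
          + ∑ c, Γ x c a b * ((∑ j, K x c i j * y j) - z c i) := by
    intro x y z a b i
    simp [invol, jetProl, hpdx, hpdy, hκlin, add_assoc]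
  refine ⟨part1, part2, ?_⟩
  intro x
  have key : ∀ (y : Fin n → ℝ) (z : Fin m → Fin n → ℝ),
      (invol Γ (jetProl κ (x, y, z))).2 =
        (y, z, fun a i => ∑ j, K x a i j * y j,
          fun b a i => (∑ j, pdK K b x a i j * y j) + (∑ j, z b j * K x a i j)
            + ∑ c, Γ x c a b * ((∑ j, K x c i j * y j) - z c i)) := by
    intro y z
    refine Prod.ext rfl (Prod.ext rfl (Prod.ext ?_ ?_))
    · funext a i; exact part1 x y z a i
    · funext b a i; exact part2 x y z a b i
  constructor
  · intro p q
    rw [key, key, key]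
    have h3 : ∀ a i, (∑ j, K x a i j * (p.1 j + q.1 j)) =
        (∑ j, K x a i j * p.1 j) + ∑ j, K x a i j * q.1 j := by
      intro a i
      rw [← Finset.sum_add_distrib]
      exact Finset.sum_congr rfl fun j _ => by ring
    refine Prod.ext rfl (Prod.ext rfl (Prod.ext ?_ ?_))
    · funext a i
      exact h3 a i
    · funext b a i
      show _ = (_ : ℝ) + _
      have e1 : ∑ j, pdK K b x a i j * (p.1 j + q.1 j) =
          (∑ j, pdK K b x a i j * p.1 j) + ∑ j, pdK K b x a i j * q.1 j := by
        rw [← Finset.sum_add_distrib]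
        exact Finset.sum_congr rfl fun j _ => by ring
      have e2 : ∑ j, (p.2 b j + q.2 b j) * K x a i j =
          (∑ j, p.2 b j * K x a i j) + ∑ j, q.2 b j * K x a i j := by
        rw [← Finset.sum_add_distrib]
        exact Finset.sum_congr rfl fun j _ => by ring
      have e3 : ∑ c, Γ x c a b * ((∑ j, K x c i j * (p.1 j + q.1 j)) - (p.2 c i + q.2 c i)) =
          (∑ c, Γ x c a b * ((∑ j, K x c i j * p.1 j) - p.2 c i))
            + ∑ c, Γ x c a b * ((∑ j, K x c i j * q.1 j) - q.2 c i) := by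
        rw [← Finset.sum_add_distrib]
        refine Finset.sum_congr rfl fun c _ => ?_
        rw [h3 c i]; ring
      simp only [Prod.fst_add, Prod.snd_add, Pi.add_apply] at e1 e2 e3 ⊢
      rw [e1, e2, e3]; ring
  · intro c p
    rw [key, key]
    have h3 : ∀ a i, (∑ j, K x a i j * (c * p.1 j)) =
        c * ∑ j, K x a i j * p.1 j := by
      intro a i
      rw [Finset.mul_sum]
      exact Finset.sum_congr rfl fun j _ => by ring
    refine Prod.ext rfl (Prod.ext rfl (Prod.ext ?_ ?_))
    · funext a i
      show _ = c * _
      simp only [Prod.smul_fst, Pi.smul_apply, smul_eq_mul] at h3 ⊢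
      exact h3 a i
    · funext b a i
      show _ = c * _
      have e1 : ∑ j, pdK K b x a i j * (c • p.1) j =
          c * ∑ j, pdK K b x a i j * p.1 j := by
        rw [Finset.mul_sum]
        refine Finset.sum_congr rfl fun j _ => ?_
        simp only [Pi.smul_apply, smul_eq_mul]; ring
      have e2 : ∑ j, (c • p.2) b j * K x a i j =
          c * ∑ j, p.2 b j * K x a i j := by
        rw [Finset.mul_sum]
        refine Finset.sum_congr rfl fun j _ => ?_
        simp only [Pi.smul_apply, smul_eq_mul]; ring
      have e3 : ∑ c' : Fin m, Γ x c' a b * ((∑ j, K x c' i j * (c • p.1) j) - (c • p.2) c' i) =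
          c * ∑ c' : Fin m, Γ x c' a b * ((∑ j, K x c' i j * p.1 j) - p.2 c' i) := by
        rw [Finset.mul_sum]
        refine Finset.sum_congr rfl fun c' _ => ?_
        simp only [Pi.smul_apply, smul_eq_mul]
        rw [show (∑ j, K x c' i j * (c * p.1 j)) = c * ∑ j, K x c' i j * p.1 j from h3 c' i]
        ring
      simp only [Prod.smul_fst, Prod.smul_snd] at e1 e2 e3 ⊢
      rw [e1, e2, e3]; ring
end
end

section
/- Let U ⊆ ℝ^m be open, let κ^i_{aj} : U → ℝ and Γ^c_{ab} : U → ℝ be smooth, and define for x ∈ U, y ∈ Matrix (Fin n) (Fin n) ℝ (entries y^i_j) and y′ ∈ Fin m → Matrix (Fin n) (Fin n) ℝ (entries y^i_{bj}): (κ↑_a)^i_j := −Σ_h κ^h_{aj} y^i_h + Σ_h κ^i_{ah} y^h_j and (κ↑_a)^i_{bj} := Σ_h ∂_b κ^i_{ah} y^h_j − Σ_h κ^h_{aj} y^i_{bh} + Σ_h y^h_{bj} κ^i_{ah} + Σ_c Γ^c_{ab} (Σ_h κ^i_{ch} y^h_j − y^i_{cj}). Then: (i) whenever y^i_j = δ^i_j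 one has (κ↑_a)^i_j = 0, i.e. the connection is reducible to the affine subbundle of linear connections {y = id}, and there (κ↑_a)^i_{bj} = ∂_b κ^i_{aj} − Σ_h κ^h_{aj} y^i_{bh} + Σ_h y^h_{bj} κ^i_{ah} + Σ_c Γ^c_{ab}(κ^i_{cj} − y^i_{cj}); (ii) evaluating at y = id and y^i_{bj} = κ^i_{bj}(x), the covariant derivative ∇_a κ^i_{bj} := ∂_a κ^i_{bj} − (κ↑_a)^i_{bj} equals ∂_a κ^i_{bj} − ∂_b κ^i_{aj} + Σ_h κ^i_{bh} κ^h_{aj} − Σ_h κ^i_{ah} κ^h_{bj} = −ρ_{ab}{}^i{}_j, where ρ_{ab}{}^i{}_j := ∂_b κ^i_{aj} − ∂_a κ^i_{bj} + Σ_h κ^i_{ah} κ^h_{bj} − Σ_h κ^i_{bh} κ^h_{aj} is the curvature of κ; in particular the result is independent of Γ. -/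
noncomputable section

/-- Partial derivative `∂_a f (x)` in the `a`-th coordinate direction of `ℝ^m`. -/
def pd {m : ℕ} (f : (Fin m → ℝ) → ℝ) (a : Fin m) (x : Fin m → ℝ) : ℝ :=
  fderiv ℝ f x (Pi.single a 1)

/-- The coefficients `(κ↑_a)^i_j = −Σ_h κ^h_{aj} y^i_h + Σ_h κ^i_{ah} y^h_j` of the induced
overconnection on `JE ⊗ E*` (vertical part along the fiber coordinate `y`);
here `κ x a i j = κ^i_{aj}(x)` and `y i j = y^i_j`. -/
def kupA {m n : ℕ} (κ : (Fin m → ℝ) → Fin m → Fin n → Fin n → ℝ)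
    (x : Fin m → ℝ) (y : Matrix (Fin n) (Fin n) ℝ) (a : Fin m) (i j : Fin n) : ℝ :=
  (-∑ h, κ x a h j * y i h) + ∑ h, κ x a i h * y h j

/-- The coefficients
`(κ↑_a)^i_{bj} = Σ_h ∂_b κ^i_{ah} y^h_j − Σ_h κ^h_{aj} y^i_{bh} + Σ_h y^h_{bj} κ^i_{ah}
 + Σ_c Γ^c_{ab}(Σ_h κ^i_{ch} y^h_j − y^i_{cj})` of the induced overconnection;
here `Γ x c a b = Γ^c_{ab}(x)` and `y' b i j = y^i_{bj}`. -/
def kupB {m n : ℕ} (κ : (Fin m → ℝ) → Fin m → Fin n → Fin n → ℝ)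
    (Γ : (Fin m → ℝ) → Fin m → Fin m → Fin m → ℝ)
    (x : Fin m → ℝ) (y : Matrix (Fin n) (Fin n) ℝ) (y' : Fin m → Matrix (Fin n) (Fin n) ℝ)
    (a b : Fin m) (i j : Fin n) : ℝ :=
  (∑ h, pd (fun t => κ t a i h) b x * y h j) - (∑ h, κ x a h j * y' b i h)
    + (∑ h, y' b h j * κ x a i h)
    + ∑ c, Γ x c a b * ((∑ h, κ x c i h * y h j) - y' c i j)

/-- The curvature `ρ_{ab}{}^i{}_j = ∂_b κ^i_{aj} − ∂_a κ^i_{bj} + Σ_h κ^i_{ah} κ^h_{bj}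
 − Σ_h κ^i_{bh} κ^h_{aj}` of the linear connection `κ`. -/
def curv {m n : ℕ} (κ : (Fin m → ℝ) → Fin m → Fin n → Fin n → ℝ)
    (x : Fin m → ℝ) (a b : Fin m) (i j : Fin n) : ℝ :=
  pd (fun t => κ t a i j) b x - pd (fun t => κ t b i j) a x
    + (∑ h, κ x a i h * κ x b h j) - ∑ h, κ x b i h * κ x a h j

/-- (i) The overconnection induced by a linear connection `κ` of a vector bundle and a linear
connection `Γ` of the base is reducible to the affine subbundle of linear connections `{y = id}`,
where its coefficients take the stated form; (ii) the covariant derivative of `κ` itself with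
respect to the induced overconnection, evaluated at `y = id`, `y' = κ(x)`, equals minus the
curvature of `κ`, and in particular is independent of `Γ`. -/
theorem overconnection_reducible_and_covariant_derivative_eq_neg_curvature
    (m n : ℕ) (hm : 1 ≤ m) (hn : 1 ≤ n)
    (U : Set (Fin m → ℝ)) (hU : IsOpen U)
    (κ : (Fin m → ℝ) → Fin m → Fin n → Fin n → ℝ)
    (hκ : ∀ a i j, ContDiffOn ℝ (⊤ : ℕ∞) (fun x => κ x a i j) U)
    (Γ : (Fin m → ℝ) → Fin m → Fin m → Fin m → ℝ)
    (hΓ : ∀ c a b, ContDiffOn ℝ (⊤ : ℕ∞) (fun x => Γ x c a b) U) :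
    -- (i) reducibility: the `y`-part of the overconnection vanishes at `y = id` ...
    (∀ x ∈ U, ∀ (a : Fin m) (i j : Fin n),
      kupA κ x (1 : Matrix (Fin n) (Fin n) ℝ) a i j = 0) ∧
    -- ... where the remaining coefficients take the stated form
    (∀ x ∈ U, ∀ (y' : Fin m → Matrix (Fin n) (Fin n) ℝ) (a b : Fin m) (i j : Fin n),
      kupB κ Γ x (1 : Matrix (Fin n) (Fin n) ℝ) y' a b i j =
        pd (fun t => κ t a i j) b x - (∑ h, κ x a h j * y' b i h)
          + (∑ h, y' b h j * κ x a i h)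
          + ∑ c, Γ x c a b * (κ x c i j - y' c i j)) ∧
    -- (ii) the covariant derivative `∇_a κ^i_{bj} = ∂_a κ^i_{bj} − (κ↑_a)^i_{bj}` at
    -- `y = id`, `y' = κ(x)` equals the stated expression, which is `−ρ_{ab}{}^i{}_j`
    (∀ x ∈ U, ∀ (a b : Fin m) (i j : Fin n),
      pd (fun t => κ t b i j) a x -
          kupB κ Γ x (1 : Matrix (Fin n) (Fin n) ℝ)
            (fun b' => Matrix.of fun i' j' => κ x b' i' j') a b i j =
        pd (fun t => κ t b i j) a x - pd (fun t => κ t a i j) b x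
          + (∑ h, κ x b i h * κ x a h j) - (∑ h, κ x a i h * κ x b h j) ∧
      pd (fun t => κ t b i j) a x -
          kupB κ Γ x (1 : Matrix (Fin n) (Fin n) ℝ)
            (fun b' => Matrix.of fun i' j' => κ x b' i' j') a b i j =
        -curv κ x a b i j) := by
  have hone : ∀ (i j : Fin n), (1 : Matrix (Fin n) (Fin n) ℝ) i j = if i = j then 1 else 0 :=
    fun i j => Matrix.one_apply
  refine ⟨?_, ?_, ?_⟩
  · intro x _ a i j
    simp [kupA, hone, mul_ite, ite_mul, Finset.sum_ite_eq, Finset.sum_ite_eq']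
  · intro x _ y' a b i j
    simp [kupB, hone, mul_ite, ite_mul, Finset.sum_ite_eq, Finset.sum_ite_eq']
  · intro x _ a b i j
    have hB : kupB κ Γ x (1 : Matrix (Fin n) (Fin n) ℝ)
        (fun b' => Matrix.of fun i' j' => κ x b' i' j') a b i j =
        pd (fun t => κ t a i j) b x - (∑ h, κ x a h j * κ x b i h)
          + (∑ h, κ x b h j * κ x a i h) := by
      simp [kupB, hone, mul_ite, ite_mul, Finset.sum_ite_eq, Finset.sum_ite_eq']
    constructor
    · rw [hB]
      have h1 : (∑ h, κ x a h j * κ x b i h) = ∑ h, κ x b i h * κ x a h j := by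
        exact Finset.sum_congr rfl fun h _ => mul_comm _ _
      have h2 : (∑ h, κ x b h j * κ x a i h) = ∑ h, κ x a i h * κ x b h j := by
        exact Finset.sum_congr rfl fun h _ => mul_comm _ _
      rw [h1, h2]; ring
    · rw [hB]
      simp only [curv]
      have h1 : (∑ h, κ x a h j * κ x b i h) = ∑ h, κ x b i h * κ x a h j := by
        exact Finset.sum_congr rfl fun h _ => mul_comm _ _
      have h2 : (∑ h, κ x b h j * κ x a i h) = ∑ h, κ x a i h * κ x b h j := by
        exact Finset.sum_congr rfl fun h _ => mul_comm _ _
      rw [h1, h2]; ring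
end
end

section
/- Let m, N ≥ 1, let g be a symmetric invertible real m×m matrix with inverse entries g^{ab}, let s > 0 be real and μ ∈ ℂ, let γ_a be arbitrary N×N complex matrices (a ∈ Fin m), γ^a := Σ_b g^{ab} γ_b, and let ψ ∈ ℂ^N (column), ψ̄ ∈ ℂ^N (row) and arrays D_a ψ ∈ ℂ^N, D_a ψ̄ ∈ ℂ^N be arbitrary. Define ℓ := ((i/2) Σ_{a,b} g^{ab} (ψ̄ γ_a D_b ψ − D_a ψ̄ γ_b ψ) − μ ψ̄ ψ) s, T_{ab} := (i/4)(ψ̄ γ_a D_b ψ + ψ̄ γ_b D_a ψ − D_a ψ̄ γ_b ψ − D_b ψ̄ γ_a ψ) s − ½ ℓ g_{ab}, U^a_b := ℓ δ^a_b − (i/2)(ψ̄ γ^a D_b ψ − D_b ψ̄ γ^a ψ) s, and U_{ab} := Σ_c g_{ac} U^c_b. Then: (i) identically, U_{ab} + U_{ba} = −2 T_{ab} + ℓ g_{ab}; (ii) if moreover the Dirac equations Σ_a γ^a D_a ψ = −iμ ψ and Σ_a D_a ψ̄ γ^a = iμ ψ̄ hold, then ℓ = 0 and hence U_{ab} + U_{ba}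 = −2 T_{ab}. -/
/-!
Lowering the index with `g g⁻¹ = 1` gives `U_{ab} = ℓ g_{ab} − (i/2)(ψ̄ γ_a D_b ψ − D_b ψ̄ γ_a ψ) s`,
and since `g` is symmetric its symmetrisation is `−2 T_{ab} + ℓ g_{ab}`. On the Dirac equations,
raising the index of `γ` with the symmetric `g⁻¹` turns the kinetic part of `ℓ` into
`(−iμ − iμ) ψ̄ ψ`, which cancels the mass term, so `ℓ = 0`.
-/

open Matrix Finset

section

variable {ι m n R : Type*} [Fintype ι] [Fintype m] [Fintype n] [CommRing R]

theorem sum_sum_mul_mul_eq_dotProduct_mulVec (u : m → R) (M : Matrix m n R) (v : n → R) :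
    ∑ α, ∑ β, u α * M α β * v β = u ⬝ᵥ (M *ᵥ v) := by
  simp only [dotProduct, mulVec, mul_sum, mul_assoc]

theorem dotProduct_sum_smul_mulVec (u : m → R) (c : ι → R) (M : ι → Matrix m n R)
    (v : n → R) : u ⬝ᵥ ((∑ d, c d • M d) *ᵥ v) = ∑ d, c d * u ⬝ᵥ (M d *ᵥ v) := by
  simp only [sum_mulVec, dotProduct_sum, smul_mulVec, dotProduct_smul, smul_eq_mul]

theorem sum_sum_mul_dotProduct_mulVec_sub_eq {G : Matrix ι ι R} (hG : G.IsSymm)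
    (γ : ι → Matrix n n R) (ψ ψb : n → R) (Dψ Dψb : ι → n → R) {c c' : R}
    (hD : ∑ a, (∑ b, G a b • γ b) *ᵥ Dψ a = c • ψ)
    (hDb : ∑ a, Dψb a ᵥ* (∑ b, G a b • γ b) = c' • ψb) :
    ∑ a, ∑ b, G a b * (ψb ⬝ᵥ (γ a *ᵥ Dψ b) - Dψb a ⬝ᵥ (γ b *ᵥ ψ)) = (c - c') * (ψb ⬝ᵥ ψ) := by
  have hψ : ∑ a, ∑ b, G a b * ψb ⬝ᵥ (γ a *ᵥ Dψ b) = c * ψb ⬝ᵥ ψ := by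
    rw [sum_comm, ← smul_eq_mul, ← dotProduct_smul, ← hD, dotProduct_sum]
    refine sum_congr rfl fun b _ => ?_
    simp only [dotProduct_sum_smul_mulVec, hG.apply b]
  have hψb : ∑ a, ∑ b, G a b * Dψb a ⬝ᵥ (γ b *ᵥ ψ) = c' * ψb ⬝ᵥ ψ := by
    rw [← smul_eq_mul, ← smul_dotProduct, ← hDb, sum_dotProduct]
    refine sum_congr rfl fun a _ => ?_
    rw [← dotProduct_mulVec, dotProduct_sum_smul_mulVec]
  simp only [mul_sub, sum_sub_distrib, hψ, hψb, sub_mul]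

end

section

variable {n R : Type*} [Fintype n] [DecidableEq n] [CommRing R]

theorem map_mul_map_nonsing_inv {S : Type*} [CommRing S] (f : R →+* S) {g : Matrix n n R}
    (hg : IsUnit g.det) : g.map f * g⁻¹.map f = 1 := by
  rw [← Matrix.map_mul, mul_nonsing_inv g hg, Matrix.map_one f f.map_zero f.map_one]

theorem mul_smul_one_sub_smul_mul_of_mul_eq_one {g g' : Matrix n n R} (h : g * g' = 1)
    (ℓ k : R) (X : Matrix n n R) : g * (ℓ • 1 - k • (g' * X)) = ℓ • g - k • X := by
  rw [mul_sub, Matrix.mul_smul, Matrix.mul_smul, ← Matrix.mul_assoc, h, Matrix.mul_one,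
    Matrix.one_mul]

end

theorem dirac_energy_tensor_vs_stress_energy_tensor_general
    (m N : ℕ)
    (g : Matrix (Fin m) (Fin m) ℝ) (hgsym : g.IsSymm) (hginv : IsUnit g.det)
    (s : ℝ) (μ : ℂ)
    (γ : Fin m → Matrix (Fin N) (Fin N) ℂ)
    (ψ ψb : Fin N → ℂ) (Dψ Dψb : Fin m → Fin N → ℂ) :
    let gi : Matrix (Fin m) (Fin m) ℝ := g⁻¹
    let γup : Fin m → Matrix (Fin N) (Fin N) ℂ := fun a => ∑ b, (gi a b : ℂ) • γ b
    -- `pair u M v = Σ_{α,β} u_α M_{αβ} v_β`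
    let pair : (Fin N → ℂ) → Matrix (Fin N) (Fin N) ℂ → (Fin N → ℂ) → ℂ := fun u M v =>
      ∑ α, ∑ β, u α * M α β * v β
    let ℓ : ℂ := ((Complex.I / 2) *
        (∑ a, ∑ b, (gi a b : ℂ) * (pair ψb (γ a) (Dψ b) - pair (Dψb a) (γ b) ψ))
      - μ * ∑ α, ψb α * ψ α) * (s : ℂ)
    let Tt : Fin m → Fin m → ℂ := fun a b =>
      (Complex.I / 4) * (pair ψb (γ a) (Dψ b) + pair ψb (γ b) (Dψ a)
          - pair (Dψb a) (γ b) ψ - pair (Dψb b) (γ a) ψ) * (s : ℂ)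
        - (1 / 2) * ℓ * (g a b : ℂ)
    let Uup : Fin m → Fin m → ℂ := fun a b =>
      ℓ * (if a = b then 1 else 0)
        - (Complex.I / 2) * (pair ψb (γup a) (Dψ b) - pair (Dψb b) (γup a) ψ) * (s : ℂ)
    let Ul : Fin m → Fin m → ℂ := fun a b => ∑ c, (g a c : ℂ) * Uup c b
    -- (i) identically:
    (∀ a b : Fin m, Ul a b + Ul b a = -2 * Tt a b + ℓ * (g a b : ℂ)) ∧
    -- (ii) on the Dirac equations:
    ((∀ α, (∑ a, ∑ β, γup a α β * Dψ a β) = -Complex.I * μ * ψ α) →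
     (∀ α, (∑ a, ∑ β, Dψb a β * γup a β α) = Complex.I * μ * ψb α) →
      ℓ = 0 ∧ ∀ a b : Fin m, Ul a b + Ul b a = -2 * Tt a b) := by
  intro gi γup pair ℓ Tt Uup Ul
  have hpair : ∀ u M v, pair u M v = u ⬝ᵥ (M *ᵥ v) := sum_sum_mul_mul_eq_dotProduct_mulVec
  let X : Matrix (Fin m) (Fin m) ℂ := of fun a b => pair ψb (γ a) (Dψ b) - pair (Dψb b) (γ a) ψ
  have hUup : of Uup = ℓ • 1 - (Complex.I / 2 * s) • (gi.map (↑) * X) := by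
    ext c b
    simp only [Uup, γup, X, hpair, dotProduct_sum_smul_mulVec, mul_apply, one_apply, of_apply,
      map_apply, Matrix.sub_apply, Matrix.smul_apply, smul_eq_mul, mul_sub, sum_sub_distrib]
    ring
  have hUl : of Ul = ℓ • g.map (↑) - (Complex.I / 2 * s) • X := by
    rw [show of Ul = g.map (↑) * of Uup from rfl, hUup]
    exact mul_smul_one_sub_smul_mul_of_mul_eq_one
      (map_mul_map_nonsing_inv Complex.ofRealHom hginv) _ _ _
  have hsymm : ∀ a b, Ul a b + Ul b a = -2 * Tt a b + ℓ * g a b := by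
    intro a b
    rw [← of_apply Ul, ← of_apply Ul b, hUl]
    simp only [Matrix.sub_apply, Matrix.smul_apply, map_apply, smul_eq_mul, X, Tt, of_apply,
      hgsym.apply a b]
    ring
  refine ⟨hsymm, fun hD hDb => ?_⟩
  have hℓ : ℓ = 0 := by
    have hD' : ∑ a, γup a *ᵥ Dψ a = (-Complex.I * μ) • ψ := by
      ext α
      simp only [Finset.sum_apply, mulVec, dotProduct, Pi.smul_apply, smul_eq_mul]
      exact hD α
    have hDb' : ∑ a, Dψb a ᵥ* γup a = (Complex.I * μ) • ψb := by
      ext α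
      simp only [Finset.sum_apply, vecMul, dotProduct, Pi.smul_apply, smul_eq_mul]
      exact hDb α
    have hkin := sum_sum_mul_dotProduct_mulVec_sub_eq (hgsym.inv.map Complex.ofReal) γ ψ ψb
      Dψ Dψb hD' hDb'
    have hdot : ∑ α, ψb α * ψ α = ψb ⬝ᵥ ψ := rfl
    simp only [map_apply] at hkin
    simp only [ℓ, gi, hpair, hdot, hkin]
    linear_combination (-μ * ψb ⬝ᵥ ψ * s) * Complex.I_mul_I
  refine ⟨hℓ, fun a b => ?_⟩
  rw [hsymm, hℓ, zero_mul, add_zero]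

/-- Pointwise relation between the canonical energy-tensor `U` and the metric stress-energy
tensor `T` of a Dirac field: (i) identically, `U_{ab} + U_{ba} = −2 T_{ab} + ℓ g_{ab}`;
(ii) on the Dirac equations, `ℓ = 0` and hence `U_{ab} + U_{ba} = −2 T_{ab}`.
Here `g` is a symmetric invertible real `m × m` matrix with inverse entries `g^{ab}`, `s > 0`
plays the role of `√|det g|`, `μ` is the mass, `γ_a` are the Dirac matrices,
`γ^a := Σ_b g^{ab} γ_b`, and `ψ`, `ψ̄`, `D_a ψ`, `D_a ψ̄` are arbitrary values of the spinor
field, its adjoint (treated as independent), and their covariant derivatives; expressions like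
`ψ̄ γ_a D_b ψ` are scalars obtained by row-matrix-column multiplication. -/
theorem dirac_energy_tensor_vs_stress_energy_tensor
    (m N : ℕ) (hm : 1 ≤ m) (hN : 1 ≤ N)
    (g : Matrix (Fin m) (Fin m) ℝ) (hgsym : g.IsSymm) (hginv : IsUnit g.det)
    (s : ℝ) (hs : 0 < s) (μ : ℂ)
    (γ : Fin m → Matrix (Fin N) (Fin N) ℂ)
    (ψ ψb : Fin N → ℂ) (Dψ Dψb : Fin m → Fin N → ℂ) :
    let gi : Matrix (Fin m) (Fin m) ℝ := g⁻¹
    let γup : Fin m → Matrix (Fin N) (Fin N) ℂ := fun a => ∑ b, (gi a b : ℂ) • γ b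
    -- `pair u M v = Σ_{α,β} u_α M_{αβ} v_β`
    let pair : (Fin N → ℂ) → Matrix (Fin N) (Fin N) ℂ → (Fin N → ℂ) → ℂ := fun u M v =>
      ∑ α, ∑ β, u α * M α β * v β
    let ℓ : ℂ := ((Complex.I / 2) *
        (∑ a, ∑ b, (gi a b : ℂ) * (pair ψb (γ a) (Dψ b) - pair (Dψb a) (γ b) ψ))
      - μ * ∑ α, ψb α * ψ α) * (s : ℂ)
    let Tt : Fin m → Fin m → ℂ := fun a b =>
      (Complex.I / 4) * (pair ψb (γ a) (Dψ b) + pair ψb (γ b) (Dψ a)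
          - pair (Dψb a) (γ b) ψ - pair (Dψb b) (γ a) ψ) * (s : ℂ)
        - (1 / 2) * ℓ * (g a b : ℂ)
    let Uup : Fin m → Fin m → ℂ := fun a b =>
      ℓ * (if a = b then 1 else 0)
        - (Complex.I / 2) * (pair ψb (γup a) (Dψ b) - pair (Dψb b) (γup a) ψ) * (s : ℂ)
    let Ul : Fin m → Fin m → ℂ := fun a b => ∑ c, (g a c : ℂ) * Uup c b
    -- (i) identically:
    (∀ a b : Fin m, Ul a b + Ul b a = -2 * Tt a b + ℓ * (g a b : ℂ)) ∧
    -- (ii) on the Dirac equations: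
    ((∀ α, (∑ a, ∑ β, γup a α β * Dψ a β) = -Complex.I * μ * ψ α) →
     (∀ α, (∑ a, ∑ β, Dψb a β * γup a β α) = Complex.I * μ * ψb α) →
      ℓ = 0 ∧ ∀ a b : Fin m, Ul a b + Ul b a = -2 * Tt a b) :=
  dirac_energy_tensor_vs_stress_energy_tensor_general m N g hgsym hginv s μ γ ψ ψb Dψ Dψb
end

section
/- Let m ≥ 1, let g be a symmetric invertible real m×m matrix with inverse entries g^{ab}, and let R_{abcd} ∈ ℝ (a,b,c,d ∈ Fin m) satisfy R_{abcd} = −R_{bacd}, R_{abcd} = −R_{abdc} and R_{abcd} = R_{cdab}. Define the Ricci tensor Ric_{bd} := Σ_{a,c} g^{ac} R_{abcd}, the scalar curvature R := Σ_{b,d} g^{bd} Ric_{bd}, the mixed Ricci tensor Ric^a_b := Σ_c g^{ac} Ric_{cb}, and the Einstein tensor G^a_b := Ric^a_b − ½ R δ^a_b. Then, for all a, b: R δ^a_b + Σ_{c,d,e,f} (g^{ad} δ^e_c − g^{ed} δ^a_c) g^{cf} R_{befd} = −2 G^a_b. -/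
/-!
Contracting the Kronecker deltas leaves two contractions of `R_{befd}` with the inverse metric,
over the slot pairs (2,3) and (2,4). Pair symmetry and antisymmetry in the first pair identify them with
`−Ric_{db}` and `+Ric_{fb}`; raising the remaining index gives `−2 Ric^a_b`, and the scalar term
supplies the `R δ^a_b` of `−2 G^a_b`.
-/

open Matrix Finset

section RiemannContraction

variable {ι R : Type*} [Fintype ι] [CommRing R] {gi : Matrix ι ι R}
  {T : ι → ι → ι → ι → R}

def ricciContraction (gi : Matrix ι ι R) (T : ι → ι → ι → ι → R) (b d : ι) : R :=
  ∑ a, ∑ c, gi a c * T a b c d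

theorem Matrix.IsSymm.sum_sum_mul_swap (hgi : gi.IsSymm) (F : ι → ι → R) :
    ∑ c, ∑ f, gi c f * F c f = ∑ c, ∑ f, gi c f * F f c := by
  rw [sum_comm]
  exact sum_congr rfl fun c _ => sum_congr rfl fun f _ => by rw [hgi.apply]

variable (h1 : ∀ a b c d, T a b c d = -T b a c d) (h3 : ∀ a b c d, T a b c d = T c d a b)
include h1 h3

theorem contract_two_three_eq_neg_ricciContraction (hgi : gi.IsSymm) (b d : ι) :
    ∑ c, ∑ f, gi c f * T b c f d = -ricciContraction gi T d b := by
  have hT : ∀ c f, T b f c d = -T c d f b := fun c f => by rw [h3 c d f b, h1 f b c d, neg_neg]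
  rw [hgi.sum_sum_mul_swap]
  simp only [hT, mul_neg, sum_neg_distrib, ricciContraction]

theorem contract_two_four_eq_ricciContraction (hgi : gi.IsSymm) (b f : ι) :
    ∑ d, ∑ e, gi e d * T b e f d = ricciContraction gi T f b := by
  have hT : ∀ d e, T b e f d = T d f e b := fun d e => by
    rw [h1 b e f d, h3 e b f d, h1 f d e b, neg_neg]
  simp only [hT, ricciContraction]
  exact sum_comm.trans (hgi.sum_sum_mul_swap fun e d => T d f e b)

theorem sum_kronecker_contraction_eq_neg_two_mul [DecidableEq ι] (hgi : gi.IsSymm) (a b : ι) :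
    ∑ c, ∑ d, ∑ e, ∑ f,
        (gi a d * (if e = c then 1 else 0) - gi e d * (if a = c then 1 else 0)) * gi c f * T b e f d
      = -2 * ∑ c, gi a c * ricciContraction gi T c b := by
  have collapse : ∑ c, ∑ d, ∑ e, ∑ f,
        (gi a d * (if e = c then 1 else 0) - gi e d * (if a = c then 1 else 0)) * gi c f * T b e f d
      = ∑ d, gi a d * ∑ c, ∑ f, gi c f * T b c f d
        - ∑ f, gi a f * ∑ d, ∑ e, gi e d * T b e f d := by
    simp only [mul_ite, mul_one, mul_zero, sub_mul, ite_mul, zero_mul, mul_assoc, sum_sub_distrib,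
      sum_ite_irrel, sum_const_zero, sum_ite_eq', mem_univ, ↓reduceIte, sum_ite_eq, mul_sum]
    congr 1
    · exact sum_comm
    · refine ((sum_congr rfl fun d _ => sum_comm).trans sum_comm).trans ?_
      simp only [mul_left_comm]
  rw [collapse]
  simp only [contract_two_three_eq_neg_ricciContraction h1 h3 hgi,
    contract_two_four_eq_ricciContraction h1 h3 hgi, mul_neg, sum_neg_distrib]
  ring

end RiemannContraction

theorem gravitational_energy_tensor_eq_neg_two_einstein_general
    (m : ℕ)
    (g : Matrix (Fin m) (Fin m) ℝ) (hgsym : g.IsSymm)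
    (R4 : Fin m → Fin m → Fin m → Fin m → ℝ)
    (h1 : ∀ a b c d, R4 a b c d = -R4 b a c d)
    (h3 : ∀ a b c d, R4 a b c d = R4 c d a b) :
    let gi : Matrix (Fin m) (Fin m) ℝ := g⁻¹
    -- Ricci tensor `Ric_{bd} = g^{ac} R_{abcd}`
    let Ric : Fin m → Fin m → ℝ := fun b d => ∑ a, ∑ c, gi a c * R4 a b c d
    -- scalar curvature `R = g^{bd} Ric_{bd}`
    let Rs : ℝ := ∑ b, ∑ d, gi b d * Ric b d
    -- mixed Ricci tensor `Ric^a_b = g^{ac} Ric_{cb}`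
    let Ricm : Fin m → Fin m → ℝ := fun a b => ∑ c, gi a c * Ric c b
    -- Einstein tensor `G^a_b = Ric^a_b − ½ R δ^a_b`
    let G : Fin m → Fin m → ℝ := fun a b => Ricm a b - (1 / 2) * Rs * (if a = b then 1 else 0)
    ∀ a b : Fin m,
      Rs * (if a = b then 1 else 0)
        + (∑ c, ∑ d, ∑ e, ∑ f,
            (gi a d * (if e = c then 1 else 0) - gi e d * (if a = c then 1 else 0))
              * gi c f * R4 b e f d)
      = -2 * G a b := by
  intro gi Ric Rs Ricm G a b
  rw [sum_kronecker_contraction_eq_neg_two_mul h1 h3 hgsym.inv a b]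
  show Rs * _ + -2 * Ricm a b = -2 * (Ricm a b - 1 / 2 * Rs * _)
  ring

/-- The algebraic identity underlying the computation that the canonical energy-tensor of the
metric-affine gravitational Lagrangian `ℒ = R √|g| d^m x` equals `−2 √|g|` times the Einstein
tensor: for a symmetric invertible `g` with inverse entries `g^{ab}` and Riemann components
`R_{abcd}` with the usual symmetries, for all `a b`,
`R δ^a_b + Σ_{c,d,e,f} (g^{ad} δ^e_c − g^{ed} δ^a_c) g^{cf} R_{befd} = −2 G^a_b`. -/
theorem gravitational_energy_tensor_eq_neg_two_einstein
    (m : ℕ) (hm : 1 ≤ m)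
    (g : Matrix (Fin m) (Fin m) ℝ) (hgsym : g.IsSymm) (hginv : IsUnit g.det)
    (R4 : Fin m → Fin m → Fin m → Fin m → ℝ)
    (h1 : ∀ a b c d, R4 a b c d = -R4 b a c d)
    (h2 : ∀ a b c d, R4 a b c d = -R4 a b d c)
    (h3 : ∀ a b c d, R4 a b c d = R4 c d a b) :
    let gi : Matrix (Fin m) (Fin m) ℝ := g⁻¹
    -- Ricci tensor `Ric_{bd} = g^{ac} R_{abcd}`
    let Ric : Fin m → Fin m → ℝ := fun b d => ∑ a, ∑ c, gi a c * R4 a b c d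
    -- scalar curvature `R = g^{bd} Ric_{bd}`
    let Rs : ℝ := ∑ b, ∑ d, gi b d * Ric b d
    -- mixed Ricci tensor `Ric^a_b = g^{ac} Ric_{cb}`
    let Ricm : Fin m → Fin m → ℝ := fun a b => ∑ c, gi a c * Ric c b
    -- Einstein tensor `G^a_b = Ric^a_b − ½ R δ^a_b`
    let G : Fin m → Fin m → ℝ := fun a b => Ricm a b - (1 / 2) * Rs * (if a = b then 1 else 0)
    ∀ a b : Fin m,
      Rs * (if a = b then 1 else 0)
        + (∑ c, ∑ d, ∑ e, ∑ f,
            (gi a d * (if e = c then 1 else 0) - gi e d * (if a = c then 1 else 0))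
              * gi c f * R4 b e f d)
      = -2 * G a b :=
  gravitational_energy_tensor_eq_neg_two_einstein_general m g hgsym R4 h1 h3
end

section
/- Let U ⊆ ℝ^m be open, let g : U → Matrix (Fin m) (Fin m) ℝ be smooth with g(x) symmetric and invertible for every x, let g^{ab} denote the entries of g(x)⁻¹, s := √|det g|, and let Γ^c_{ab} := ½ g^{cd}(∂_a g_{bd} + ∂_b g_{ad} − ∂_d g_{ab}) be the Levi-Civita Christoffel symbols. Then for every smooth J : U → ℝ^m one has ∂_a (s J^a) = s (∂_a J^a + Γ^a_{ab} J^b) on U (sum over repeated indices); equivalently, ∂_b s = Γ^a_{ab} s, so the coordinate divergence of the vector density s J^a equals s times the covariant divergence of J. -/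
open Matrix

noncomputable section

open Topology

section RepAuxHelpers
variable {m : ℕ}

/-- det as a continuous multilinear map in the rows. -/
def detCM (m : ℕ) : ContinuousMultilinearMap ℝ (fun _ : Fin m => (Fin m → ℝ)) ℝ :=
  MultilinearMap.mkContinuous
    ((Matrix.detRowAlternating : ((Fin m → ℝ) [⋀^Fin m]→ₗ[ℝ] ℝ)).toMultilinearMap)
    (m.factorial) (by
      intro v
      have h1 : ((Matrix.detRowAlternating : ((Fin m → ℝ) [⋀^Fin m]→ₗ[ℝ] ℝ)).toMultilinearMap) v
          = (Matrix.of v).det := rfl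
      rw [h1, Matrix.det_apply]
      have hterm : ∀ σ : Equiv.Perm (Fin m),
          ‖(Equiv.Perm.sign σ : ℤ) • ∏ i, Matrix.of v (σ i) i‖ ≤ ∏ i, ‖v i‖ := by
        intro σ
        have : ‖(Equiv.Perm.sign σ : ℤ) • ∏ i, Matrix.of v (σ i) i‖
            = ‖∏ i, Matrix.of v (σ i) i‖ := by
          rcases Int.units_eq_one_or (Equiv.Perm.sign σ) with h | h <;> simp [h]
        rw [this]
        calc ‖∏ i, Matrix.of v (σ i) i‖ ≤ ∏ i, ‖v (σ i) i‖ := by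
              rw [Real.norm_eq_abs, Finset.abs_prod]
              exact le_of_eq (by simp [Real.norm_eq_abs])
          _ ≤ ∏ i, ‖v (σ i)‖ :=
              Finset.prod_le_prod (fun i _ => norm_nonneg _)
                (fun i _ => norm_le_pi_norm (v (σ i)) i)
          _ = ∏ i, ‖v i‖ := Equiv.prod_comp σ (fun i => ‖v i‖)
      calc ‖∑ σ : Equiv.Perm (Fin m), (Equiv.Perm.sign σ : ℤ) • ∏ i, Matrix.of v (σ i) i‖
          ≤ ∑ σ : Equiv.Perm (Fin m), ‖(Equiv.Perm.sign σ : ℤ) • ∏ i, Matrix.of v (σ i) i‖ :=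
            norm_sum_le _ _
        _ ≤ ∑ _σ : Equiv.Perm (Fin m), ∏ i, ‖v i‖ :=
            Finset.sum_le_sum (fun σ _ => hterm σ)
        _ = (m.factorial : ℝ) * ∏ i, ‖v i‖ := by
            simp [Finset.sum_const, Fintype.card_perm, mul_comm]
            )

lemma detCM_apply (v : Fin m → Fin m → ℝ) : detCM m v = (Matrix.of v).det := rfl


lemma det_updateRow_eq_sum_adjugate (A : Matrix (Fin m) (Fin m) ℝ) (i : Fin m) (v : Fin m → ℝ) :
    (A.updateRow i v).det = ∑ k, v k * A.adjugate k i := by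
  let L : (Fin m → ℝ) →ₗ[ℝ] ℝ :=
    { toFun := fun w => (A.updateRow i w).det
      map_add' := fun u w => Matrix.det_updateRow_add A i u w
      map_smul' := fun c w => Matrix.det_updateRow_smul A i c w }
  have hv : v = ∑ k, v k • (Pi.single k (1 : ℝ) : Fin m → ℝ) := by
    ext j
    simp [Pi.single_apply]
  have : L v = ∑ k, v k * L (Pi.single k 1) := by
    conv_lhs => rw [hv]
    rw [map_sum]
    simp [L]
  simpa [L, Matrix.adjugate_apply] using this


lemma hasFDerivAt_sqrt_abs {m : ℕ} {d : (Fin m → ℝ) → ℝ} {D : (Fin m → ℝ) →L[ℝ] ℝ}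
    {x : Fin m → ℝ} (hd : HasFDerivAt d D x) (hdx : d x ≠ 0) :
    HasFDerivAt (fun t => Real.sqrt |d t|) ((Real.sqrt |d x| / (2 * d x)) • D) x := by
  rcases hdx.lt_or_gt with hneg | hpos
  · have hev : (fun t => Real.sqrt |d t|) =ᶠ[𝓝 x] fun t => Real.sqrt (-d t) := by
      have : ∀ᶠ t in 𝓝 x, d t < 0 := hd.continuousAt.eventually_lt continuousAt_const hneg
      filter_upwards [this] with t ht
      rw [abs_of_neg ht]
    have hsq : (0:ℝ) < Real.sqrt (-d x) := Real.sqrt_pos.2 (by linarith)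
    have h1 : HasFDerivAt (fun t => Real.sqrt (-d t))
        ((1 / (2 * Real.sqrt (-d x))) • (-D)) x :=
      (Real.hasDerivAt_sqrt (by linarith)).comp_hasFDerivAt x hd.neg
    have h2 : HasFDerivAt (fun t => Real.sqrt |d t|)
        ((1 / (2 * Real.sqrt (-d x))) • (-D)) x := h1.congr_of_eventuallyEq hev
    convert h2 using 1
    rw [smul_neg, ← neg_smul]
    congr 1
    rw [abs_of_neg hneg]
    have hms : Real.sqrt (-d x) * Real.sqrt (-d x) = -d x :=
      Real.mul_self_sqrt (by linarith)
    field_simp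
    nlinarith [hms]
  · have hev : (fun t => Real.sqrt |d t|) =ᶠ[𝓝 x] fun t => Real.sqrt (d t) := by
      have : ∀ᶠ t in 𝓝 x, 0 < d t := continuousAt_const.eventually_lt hd.continuousAt hpos
      filter_upwards [this] with t ht
      rw [abs_of_pos ht]
    have hsq : (0:ℝ) < Real.sqrt (d x) := Real.sqrt_pos.2 hpos
    have h1 : HasFDerivAt (fun t => Real.sqrt (d t))
        ((1 / (2 * Real.sqrt (d x))) • D) x :=
      (Real.hasDerivAt_sqrt (ne_of_gt hpos)).comp_hasFDerivAt x hd
    have h2 : HasFDerivAt (fun t => Real.sqrt |d t|)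
        ((1 / (2 * Real.sqrt (d x))) • D) x := h1.congr_of_eventuallyEq hev
    convert h2 using 2
    rw [abs_of_pos hpos]
    have hms : Real.sqrt (d x) * Real.sqrt (d x) = d x :=
      Real.mul_self_sqrt hpos.le
    field_simp
    nlinarith [hms]

lemma hasFDerivAt_det {g : (Fin m → ℝ) → Matrix (Fin m) (Fin m) ℝ} {x : Fin m → ℝ}
    (hg : ∀ a b, DifferentiableAt ℝ (fun t => g t a b) x) :
    HasFDerivAt (fun t => (g t).det)
      (∑ i, ((detCM m).toContinuousLinearMap (fun j => g x j) i) ∘L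
        (ContinuousLinearMap.pi (fun k => fderiv ℝ (fun t => g t i k) x))) x := by
  have h := HasFDerivAt.multilinear_comp (f := detCM m)
    (g := fun i => fun t => g t i)
    (g' := fun i => ContinuousLinearMap.pi (fun k => fderiv ℝ (fun t => g t i k) x)) (x := x)
    (fun i => hasFDerivAt_pi.2 (fun k => (hg i k).hasFDerivAt))
  exact h

lemma pd_det {g : (Fin m → ℝ) → Matrix (Fin m) (Fin m) ℝ} {x : Fin m → ℝ}
    (hg : ∀ a b, DifferentiableAt ℝ (fun t => g t a b) x) (b : Fin m) :
    pd (fun t => (g t).det) b x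
      = ∑ i, ∑ k, (g x).adjugate k i * pd (fun t => g t i k) b x := by
  have h := (hasFDerivAt_det hg).fderiv
  rw [pd, h]
  rw [ContinuousLinearMap.sum_apply]
  refine Finset.sum_congr rfl (fun i _ => ?_)
  have : ((detCM m).toContinuousLinearMap (fun j => g x j) i)
      ((ContinuousLinearMap.pi (fun k => fderiv ℝ (fun t => g t i k) x)) (Pi.single b 1))
      = ((g x).updateRow i (fun k => pd (fun t => g t i k) b x)).det := rfl
  rw [ContinuousLinearMap.comp_apply, this, det_updateRow_eq_sum_adjugate]
  exact Finset.sum_congr rfl (fun k _ => mul_comm _ _)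

end RepAuxHelpers

/-- Coordinate form of the replacement principle for a torsion-free metric connection:
with `s = √|det g|` and `Γ` the Levi-Civita Christoffel symbols of `g`, for every smooth
`J : U → ℝ^m` one has `∂_a (s J^a) = s (∂_a J^a + Γ^a_{ab} J^b)` on `U`; equivalently
`∂_b s = Γ^a_{ab} s`, so the coordinate divergence of the vector density `s J^a` equals `s`
times the covariant divergence of `J`. -/
theorem replacement_principle_divergence
    (m : ℕ) (hm : 1 ≤ m)
    (U : Set (Fin m → ℝ)) (hU : IsOpen U)
    (g : (Fin m → ℝ) → Matrix (Fin m) (Fin m) ℝ)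
    (hgsm : ∀ a b, ContDiffOn ℝ (⊤ : ℕ∞) (fun x => g x a b) U)
    (hgsym : ∀ x ∈ U, (g x).IsSymm)
    (hginv : ∀ x ∈ U, IsUnit (g x).det) :
    let gi : (Fin m → ℝ) → Matrix (Fin m) (Fin m) ℝ := fun x => (g x)⁻¹
    let s : (Fin m → ℝ) → ℝ := fun x => Real.sqrt |(g x).det|
    let Γ : (Fin m → ℝ) → Fin m → Fin m → Fin m → ℝ := fun x c a b =>
      (1 / 2) * ∑ d, gi x c d *
        (pd (fun t => g t b d) a x + pd (fun t => g t a d) b x - pd (fun t => g t a b) d x)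
    (∀ J : (Fin m → ℝ) → Fin m → ℝ, (∀ a, ContDiffOn ℝ (⊤ : ℕ∞) (fun x => J x a) U) →
      ∀ x ∈ U,
        (∑ a, pd (fun t => s t * J t a) a x) =
          s x * ((∑ a, pd (fun t => J t a) a x) + ∑ a, ∑ b, Γ x a a b * J x b)) ∧
    (∀ x ∈ U, ∀ b, pd s b x = (∑ a, Γ x a a b) * s x) := by
  intro gi s Γ
  -- basic differentiability of the metric entries
  have hgd : ∀ x ∈ U, ∀ a b, DifferentiableAt ℝ (fun t => g t a b) x := fun x hx a b =>
    ((hgsm a b).contDiffAt (hU.mem_nhds hx)).differentiableAt (by simp)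
  have hdet0 : ∀ x ∈ U, (g x).det ≠ 0 := fun x hx => (hginv x hx).ne_zero
  -- symmetry of partial derivatives of the metric entries
  have hpdsym : ∀ x ∈ U, ∀ a b c,
      pd (fun t => g t a b) c x = pd (fun t => g t b a) c x := by
    intro x hx a b c
    have hev : (fun t => g t a b) =ᶠ[𝓝 x] (fun t => g t b a) :=
      Filter.eventuallyEq_of_mem (hU.mem_nhds hx) (fun t ht => ((hgsym t ht).apply b a))
    unfold pd
    rw [hev.fderiv_eq]
  -- symmetry of the inverse metric
  have hgis : ∀ x ∈ U, ∀ i k, gi x i k = gi x k i := by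
    intro x hx i k
    have h : ((g x)⁻¹)ᵀ = (g x)⁻¹ := by
      rw [Matrix.transpose_nonsing_inv, (hgsym x hx).eq]
    have := congrFun (congrFun h k) i
    simpa [Matrix.transpose_apply] using this
  -- adjugate in terms of the inverse
  have hadj : ∀ x ∈ U, ∀ k i, (g x).adjugate k i = (g x).det * gi x k i := by
    intro x hx k i
    have h : gi x k i = ((g x).det)⁻¹ * (g x).adjugate k i := by
      show (g x)⁻¹ k i = _
      rw [Matrix.inv_def, Ring.inverse_eq_inv]
      simp [Matrix.smul_apply, smul_eq_mul]
    rw [h]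
    field_simp [hdet0 x hx]
  -- the trace term
  set T : (Fin m → ℝ) → Fin m → ℝ :=
    fun x b => ∑ i, ∑ k, gi x i k * pd (fun t => g t i k) b x with hT
  -- contracted Christoffel symbol equals half the trace term
  have hΓ : ∀ x ∈ U, ∀ b, (∑ a, Γ x a a b) = (1/2) * T x b := by
    intro x hx b
    have hsplit : ∀ a : Fin m, Γ x a a b =
        (1/2) * ((∑ dd, gi x a dd * pd (fun t => g t b dd) a x)
          + (∑ dd, gi x a dd * pd (fun t => g t a dd) b x)
          - (∑ dd, gi x a dd * pd (fun t => g t a b) dd x)) := by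
      intro a
      show (1 / 2) * ∑ dd, gi x a dd *
        (pd (fun t => g t b dd) a x + pd (fun t => g t a dd) b x
          - pd (fun t => g t a b) dd x) = _
      rw [← Finset.sum_add_distrib, ← Finset.sum_sub_distrib]
      congr 1
      exact Finset.sum_congr rfl (fun dd _ => by ring)
    have hS13 : (∑ a, ∑ dd, gi x a dd * pd (fun t => g t a b) dd x)
        = ∑ a, ∑ dd, gi x a dd * pd (fun t => g t b dd) a x := by
      rw [Finset.sum_comm]
      refine Finset.sum_congr rfl (fun a _ => Finset.sum_congr rfl (fun dd _ => ?_))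
      rw [hgis x hx dd a, hpdsym x hx dd b a]
    calc (∑ a, Γ x a a b)
        = ∑ a, (1/2) * ((∑ dd, gi x a dd * pd (fun t => g t b dd) a x)
          + (∑ dd, gi x a dd * pd (fun t => g t a dd) b x)
          - (∑ dd, gi x a dd * pd (fun t => g t a b) dd x)) :=
          Finset.sum_congr rfl (fun a _ => hsplit a)
      _ = (1/2) * ((∑ a, ∑ dd, gi x a dd * pd (fun t => g t b dd) a x)
          + (∑ a, ∑ dd, gi x a dd * pd (fun t => g t a dd) b x)
          - (∑ a, ∑ dd, gi x a dd * pd (fun t => g t a b) dd x)) := by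
          rw [← Finset.mul_sum, ← Finset.sum_add_distrib, ← Finset.sum_sub_distrib]
      _ = (1/2) * T x b := by rw [hS13]; ring_nf; rfl
  -- Jacobi's formula for the metric determinant
  have hpdd : ∀ x ∈ U, ∀ b,
      pd (fun t => (g t).det) b x = (g x).det * T x b := by
    intro x hx b
    rw [pd_det (hgd x hx) b, hT]
    rw [Finset.mul_sum]
    refine Finset.sum_congr rfl (fun i _ => ?_)
    rw [Finset.mul_sum]
    refine Finset.sum_congr rfl (fun k _ => ?_)
    rw [hadj x hx k i, hgis x hx i k]
    ring
  -- derivative of s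
  have hs : ∀ x ∈ U, HasFDerivAt s
      ((s x / (2 * (g x).det)) • fderiv ℝ (fun t => (g t).det) x) x := by
    intro x hx
    have hDet : HasFDerivAt (fun t => (g t).det)
        (fderiv ℝ (fun t => (g t).det) x) x := by
      have h := hasFDerivAt_det (hgd x hx)
      exact h.fderiv ▸ h
    exact hasFDerivAt_sqrt_abs hDet (hdet0 x hx)
  -- second claim
  have h2 : ∀ x ∈ U, ∀ b, pd s b x = (∑ a, Γ x a a b) * s x := by
    intro x hx b
    have hfd := (hs x hx).fderiv
    have : pd s b x = (s x / (2 * (g x).det)) * pd (fun t => (g t).det) b x := by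
      unfold pd
      rw [hfd]
      simp
    rw [this, hpdd x hx b, hΓ x hx b]
    field_simp [hdet0 x hx]
  refine ⟨?_, h2⟩
  intro J hJ x hx
  have hJd : ∀ a, DifferentiableAt ℝ (fun t => J t a) x := fun a =>
    ((hJ a).contDiffAt (hU.mem_nhds hx)).differentiableAt (by simp)
  have hsd : DifferentiableAt ℝ s x := (hs x hx).differentiableAt
  have hprod : ∀ a, pd (fun t => s t * J t a) a x
      = s x * pd (fun t => J t a) a x + J x a * pd s a x := by
    intro a
    unfold pd
    rw [fderiv_fun_mul hsd (hJd a)]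
    simp [mul_comm]
  have hswap : (∑ a, ∑ b, Γ x a a b * J x b) = ∑ b, (∑ a, Γ x a a b) * J x b := by
    rw [Finset.sum_comm]
    exact Finset.sum_congr rfl (fun b _ => (Finset.sum_mul _ _ _).symm)
  calc (∑ a, pd (fun t => s t * J t a) a x)
      = ∑ a, (s x * pd (fun t => J t a) a x + J x a * ((∑ c, Γ x c c a) * s x)) := by
        refine Finset.sum_congr rfl (fun a _ => ?_)
        rw [hprod a, h2 x hx a]
    _ = s x * ((∑ a, pd (fun t => J t a) a x) + ∑ a, ∑ b, Γ x a a b * J x b) := by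
        rw [hswap, Finset.sum_add_distrib, mul_add, ← Finset.mul_sum]
        congr 1
        rw [Finset.mul_sum]
        exact Finset.sum_congr rfl (fun a _ => by ring)
end
end

section
/- Let U ⊆ ℝ^m be open, let g : U → Matrix (Fin m) (Fin m) ℝ be smooth with g(x) symmetric and invertible for every x, let g^{ab} denote the entries of g(x)⁻¹, s := √|det g|, and let Γ^c_{ab} := ½ g^{cd}(∂_a g_{bd} + ∂_b g_{ad} − ∂_d g_{ab}) be the Levi-Civita Christoffel symbols. For a smooth X : U → ℝ^m set ∇_a X^b := ∂_a X^b + Γ^b_{ac} X^c, F^{ab} := g^{ac} ∇_c X^b − g^{bc} ∇_c X^a, and define the Komar current J^b := ∂_a F^{ab} + Γ^a_{ac} F^{cb} + Γ^b_{ac} F^{ac}. Then ∂_b (s J^b) = 0 on U, i.e. the Komar current associated with any smooth vector field X is conserved off-shell. -/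
open Matrix

open scoped ContDiff

set_option maxHeartbeats 1600000

noncomputable section

namespace KomarAux

variable {m : ℕ} {U : Set (Fin m → ℝ)}

theorem pd_congr {f h : (Fin m → ℝ) → ℝ} {x : Fin m → ℝ} (hfh : f =ᶠ[nhds x] h) (a : Fin m) :
    pd f a x = pd h a x := by
  unfold pd
  rw [hfh.fderiv_eq]

theorem pd_congr_on {f h : (Fin m → ℝ) → ℝ} (hU : IsOpen U) (hfh : ∀ y ∈ U, f y = h y)
    {x : Fin m → ℝ} (hx : x ∈ U) (a : Fin m) : pd f a x = pd h a x :=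
  pd_congr (Filter.eventuallyEq_iff_exists_mem.2 ⟨U, hU.mem_nhds hx, hfh⟩) a

theorem pd_sum {ι : Type*} (t : Finset ι) {f : ι → (Fin m → ℝ) → ℝ} {x : Fin m → ℝ}
    (hf : ∀ i ∈ t, DifferentiableAt ℝ (f i) x) (a : Fin m) :
    pd (fun y => ∑ i ∈ t, f i y) a x = ∑ i ∈ t, pd (f i) a x := by
  unfold pd
  rw [fderiv_fun_sum hf]
  simp

theorem pd_mul {f h : (Fin m → ℝ) → ℝ} {x : Fin m → ℝ} (hf : DifferentiableAt ℝ f x)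
    (hh : DifferentiableAt ℝ h x) (a : Fin m) :
    pd (fun y => f y * h y) a x = pd f a x * h x + f x * pd h a x := by
  unfold pd
  rw [fderiv_fun_mul hf hh]
  simp only [ContinuousLinearMap.add_apply, ContinuousLinearMap.smul_apply, smul_eq_mul]
  ring

theorem pd_neg {f : (Fin m → ℝ) → ℝ} {x : Fin m → ℝ} (a : Fin m) :
    pd (fun y => -(f y)) a x = -pd f a x := by
  unfold pd
  rw [fderiv_fun_neg]
  simp

theorem diffAt (hU : IsOpen U) {f : (Fin m → ℝ) → ℝ} (hf : ContDiffOn ℝ ∞ f U)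
    {x : Fin m → ℝ} (hx : x ∈ U) : DifferentiableAt ℝ f x :=
  (hf.differentiableOn (by norm_num)).differentiableAt (hU.mem_nhds hx)

theorem contDiffOn_pd (hU : IsOpen U) {f : (Fin m → ℝ) → ℝ} (hf : ContDiffOn ℝ ∞ f U)
    (a : Fin m) : ContDiffOn ℝ ∞ (fun x => pd f a x) U := by
  have h1 : ContDiffOn ℝ ∞ (fun x => fderiv ℝ f x) U :=
    hf.fderiv_of_isOpen hU (by norm_num)
  exact h1.clm_apply contDiffOn_const

theorem pd_swap (hU : IsOpen U) {f : (Fin m → ℝ) → ℝ} (hf : ContDiffOn ℝ ∞ f U)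
    {x : Fin m → ℝ} (hx : x ∈ U) (a b : Fin m) :
    pd (fun y => pd f a y) b x = pd (fun y => pd f b y) a x := by
  have hdf : ContDiffOn ℝ ∞ (fun y => fderiv ℝ f y) U :=
    hf.fderiv_of_isOpen hU (by norm_num)
  have hdfd : DifferentiableAt ℝ (fun y => fderiv ℝ f y) x :=
    (hdf.differentiableOn (by norm_num)).differentiableAt (hU.mem_nhds hx)
  have hev : ∀ᶠ y in nhds x, HasFDerivAt f (fderiv ℝ f y) y := by
    filter_upwards [hU.mem_nhds hx] with y hy
    exact ((hf.differentiableOn (by norm_num)).differentiableAt (hU.mem_nhds hy)).hasFDerivAt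
  have hsymm := second_derivative_symmetric_of_eventually hev hdfd.hasFDerivAt
    (Pi.single b 1) (Pi.single a 1)
  have key : ∀ v w : Fin m → ℝ,
      fderiv ℝ (fun y => fderiv ℝ f y w) x v = fderiv ℝ (fun y => fderiv ℝ f y) x v w := by
    intro v w
    have : (fun y => fderiv ℝ f y w)
        = fun y => (ContinuousLinearMap.apply ℝ ℝ w) (fderiv ℝ f y) := rfl
    rw [this, show (fun y => (ContinuousLinearMap.apply ℝ ℝ w) (fderiv ℝ f y))
        = ((ContinuousLinearMap.apply ℝ ℝ w) ∘ fun y => fderiv ℝ f y) from rfl,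
      fderiv_comp x (ContinuousLinearMap.apply ℝ ℝ w).differentiableAt hdfd]
    simp
  unfold pd
  rw [key, key, hsymm]

/-- determinant as a continuous multilinear map in the rows -/
def detCML (m : ℕ) : ContinuousMultilinearMap ℝ (fun _ : Fin m => (Fin m → ℝ)) ℝ :=
  MultilinearMap.mkContinuous
    (Matrix.detRowAlternating (R := ℝ) (n := Fin m)).toMultilinearMap
    (Nat.factorial m) (by
      intro M
      have h1 : (Matrix.detRowAlternating (R := ℝ) (n := Fin m)).toMultilinearMap M
          = Matrix.det (Matrix.of M) := rfl
      rw [h1, Matrix.det_apply]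
      refine le_trans (norm_sum_le _ _) ?_
      have h2 : ∀ σ : Equiv.Perm (Fin m),
          ‖(Equiv.Perm.sign σ : ℤ) • ∏ i, Matrix.of M (σ i) i‖ ≤ ∏ i, ‖M i‖ := by
        intro σ
        rw [zsmul_eq_mul]
        rw [norm_mul]
        have : ‖((Equiv.Perm.sign σ : ℤ) : ℝ)‖ = 1 := by
          rcases Int.units_eq_one_or (Equiv.Perm.sign σ) with h | h <;> simp [h]
        rw [this, one_mul]
        calc ‖∏ i, Matrix.of M (σ i) i‖ = ∏ i, ‖Matrix.of M (σ i) i‖ := norm_prod _ _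
        _ ≤ ∏ i, ‖M (σ i)‖ := by
            refine Finset.prod_le_prod (fun i _ => norm_nonneg _) (fun i _ => ?_)
            exact norm_le_pi_norm (M (σ i)) i
        _ = ∏ i, ‖M i‖ := Equiv.prod_comp σ (fun i => ‖M i‖)
      refine le_trans (Finset.sum_le_sum (fun σ _ => h2 σ)) ?_
      rw [Finset.sum_const, Finset.card_univ, Fintype.card_perm, nsmul_eq_mul]
      simp [Fintype.card_fin])

theorem detCML_apply (M : Matrix (Fin m) (Fin m) ℝ) : detCML m (fun i => M i) = M.det := rfl

theorem det_updateRow_eq_sum (M : Matrix (Fin m) (Fin m) ℝ) (i : Fin m) (v : Fin m → ℝ) :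
    (M.updateRow i v).det = ∑ j, v j * M.adjugate j i := by
  have hv : v = ∑ j, v j • (Pi.single j 1 : Fin m → ℝ) := by
    ext k
    simp [Pi.single_apply, Finset.sum_ite_eq, eq_comm]
  conv_lhs => rw [hv]
  have key : ∀ (t : Finset (Fin m)),
      (M.updateRow i (∑ j ∈ t, v j • (Pi.single j 1 : Fin m → ℝ))).det
        = ∑ j ∈ t, v j * M.adjugate j i := by
    intro t
    induction t using Finset.induction_on with
    | empty =>
        simp only [Finset.sum_empty]
        exact Matrix.det_eq_zero_of_row_eq_zero i (by simp)
    | @insert k t hk ih =>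
        rw [Finset.sum_insert hk, Matrix.det_updateRow_add, Matrix.det_updateRow_smul, ih,
          Finset.sum_insert hk, Matrix.adjugate_apply]
  exact key Finset.univ

theorem pd_det (hU : IsOpen U) {g : (Fin m → ℝ) → Matrix (Fin m) (Fin m) ℝ}
    (hg : ∀ a b, ContDiffOn ℝ ∞ (fun x => g x a b) U)
    {x : Fin m → ℝ} (hx : x ∈ U) (c : Fin m) :
    pd (fun t => (g t).det) c x
      = ∑ i, ∑ j, pd (fun t => g t i j) c x * (g x).adjugate j i := by
  classical
  set L : Fin m → (Fin m → ℝ) →L[ℝ] (Fin m → ℝ) :=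
    fun i => ContinuousLinearMap.pi (fun j => fderiv ℝ (fun y => g y i j) x) with hL
  have hrow : ∀ i, HasFDerivAt (fun y j => g y i j) (L i) x := by
    intro i
    exact hasFDerivAt_pi.2 (fun j => (diffAt hU (hg i j) hx).hasFDerivAt)
  have H := HasFDerivAt.multilinear_comp (f := detCML m) hrow
  have heq : (fun y => detCML m (fun i j => g y i j)) = fun y => (g y).det := by
    funext y
    exact detCML_apply (g y)
  rw [heq] at H
  have : pd (fun t => (g t).det) c x
      = (∑ i, ((detCML m).toContinuousLinearMap (fun i j => g x i j) i) ∘L (L i))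
          (Pi.single c 1) := by
    unfold pd
    rw [H.fderiv]
  rw [this]
  rw [ContinuousLinearMap.sum_apply]
  refine Finset.sum_congr rfl (fun i _ => ?_)
  rw [ContinuousLinearMap.comp_apply]
  have hli : L i (Pi.single c 1) = fun j => pd (fun y => g y i j) c x := by
    ext j
    rfl
  rw [hli]
  have h2 : ((detCML m).toContinuousLinearMap (fun i j => g x i j) i)
        (fun j => pd (fun y => g y i j) c x)
      = detCML m (Function.update (fun i j => g x i j) i (fun j => pd (fun y => g y i j) c x)) := by
    simp [ContinuousMultilinearMap.toContinuousLinearMap]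
  rw [h2]
  have h3 : detCML m (Function.update (fun i j => g x i j) i (fun j => pd (fun y => g y i j) c x))
      = ((g x).updateRow i (fun j => pd (fun y => g y i j) c x)).det := by
    exact detCML_apply _
  rw [h3, det_updateRow_eq_sum]

theorem contDiffOn_det {g : (Fin m → ℝ) → Matrix (Fin m) (Fin m) ℝ}
    (hg : ∀ a b, ContDiffOn ℝ ∞ (fun x => g x a b) U) :
    ContDiffOn ℝ ∞ (fun y => (g y).det) U := by
  have heq : (fun y => (g y).det)
      = fun y => ∑ σ : Equiv.Perm (Fin m),
          (((Equiv.Perm.sign σ : ℤ) : ℝ)) * ∏ i, g y (σ i) i := by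
    funext y
    rw [Matrix.det_apply']
  rw [heq]
  exact ContDiffOn.sum (fun σ _ =>
    contDiffOn_const.mul (contDiffOn_prod (fun i _ => hg (σ i) i)))

theorem contDiffOn_adjugate {g : (Fin m → ℝ) → Matrix (Fin m) (Fin m) ℝ}
    (hg : ∀ a b, ContDiffOn ℝ ∞ (fun x => g x a b) U) (a b : Fin m) :
    ContDiffOn ℝ ∞ (fun y => (g y).adjugate a b) U := by
  have heq : (fun y => (g y).adjugate a b)
      = fun y => ((g y).updateRow b (Pi.single a 1)).det := by
    funext y; rw [Matrix.adjugate_apply]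
  rw [heq]
  exact contDiffOn_det (fun i j => by
    by_cases h : i = b
    · subst h
      simpa [Matrix.updateRow_apply] using (contDiffOn_const (c := (Pi.single a 1 : Fin m → ℝ) j))
    · simpa [Matrix.updateRow_apply, h] using hg i j)

theorem pd_sqrt_abs {D : (Fin m → ℝ) → ℝ} {x : Fin m → ℝ} (hD : DifferentiableAt ℝ D x)
    (hne : D x ≠ 0) (c : Fin m) :
    pd (fun t => Real.sqrt |D t|) c x = Real.sqrt |D x| / (2 * D x) * pd D c x := by
  rcases hne.lt_or_gt with hneg | hpos
  · have hev : ∀ᶠ t in nhds x, D t ∈ Set.Iio (0:ℝ) :=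
      hD.continuousAt.preimage_mem_nhds (Iio_mem_nhds hneg)
    have h1 : pd (fun t => Real.sqrt |D t|) c x = pd (fun t => Real.sqrt (-(D t))) c x := by
      refine pd_congr ?_ c
      filter_upwards [hev] with t ht
      rw [abs_of_neg ht]
    have hDn : HasFDerivAt (fun t => -(D t)) (-(fderiv ℝ D x)) x := hD.hasFDerivAt.neg
    have h2 : HasFDerivAt (fun t => Real.sqrt (-(D t)))
        ((1 / (2 * Real.sqrt (-(D x)))) • (-(fderiv ℝ D x))) x :=
      (Real.hasDerivAt_sqrt (neg_ne_zero.2 hne)).comp_hasFDerivAt x hDn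
    rw [h1]
    show fderiv ℝ _ x (Pi.single c 1) = _
    rw [h2.fderiv]
    have hs : Real.sqrt (-(D x)) * Real.sqrt (-(D x)) = -(D x) :=
      Real.mul_self_sqrt (by linarith)
    have hsne : Real.sqrt (-(D x)) ≠ 0 := Real.sqrt_ne_zero'.2 (by linarith)
    simp only [ContinuousLinearMap.smul_apply, ContinuousLinearMap.neg_apply, smul_eq_mul,
      abs_of_neg hneg]
    show 1 / (2 * Real.sqrt (-D x)) * -(fderiv ℝ D x (Pi.single c 1))
      = Real.sqrt (-D x) / (2 * D x) * pd D c x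
    unfold pd
    field_simp
    linear_combination (-fderiv ℝ D x (Pi.single c 1)) * hs
  · have hev : ∀ᶠ t in nhds x, D t ∈ Set.Ioi (0:ℝ) :=
      hD.continuousAt.preimage_mem_nhds (Ioi_mem_nhds hpos)
    have h1 : pd (fun t => Real.sqrt |D t|) c x = pd (fun t => Real.sqrt (D t)) c x := by
      refine pd_congr ?_ c
      filter_upwards [hev] with t ht
      rw [abs_of_pos ht]
    have h2 : HasFDerivAt (fun t => Real.sqrt (D t))
        ((1 / (2 * Real.sqrt (D x))) • (fderiv ℝ D x)) x :=
      (Real.hasDerivAt_sqrt (ne_of_gt hpos)).comp_hasFDerivAt x hD.hasFDerivAt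
    rw [h1]
    show fderiv ℝ _ x (Pi.single c 1) = _
    rw [h2.fderiv]
    have hs : Real.sqrt (D x) * Real.sqrt (D x) = D x := Real.mul_self_sqrt hpos.le
    have hsne : Real.sqrt (D x) ≠ 0 := by positivity
    simp only [ContinuousLinearMap.smul_apply, smul_eq_mul, abs_of_pos hpos]
    show 1 / (2 * Real.sqrt (D x)) * (fderiv ℝ D x (Pi.single c 1))
      = Real.sqrt (D x) / (2 * D x) * pd D c x
    unfold pd
    field_simp
    linear_combination (-fderiv ℝ D x (Pi.single c 1)) * hs

end KomarAux

open KomarAux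

/-- Off-shell conservation of the Komar current: with `s = √|det g|`, `Γ` the Levi-Civita
Christoffel symbols of `g`, `∇_a X^b = ∂_a X^b + Γ^b_{ac} X^c`,
`F^{ab} = g^{ac} ∇_c X^b − g^{bc} ∇_c X^a` and
`J^b = ∂_a F^{ab} + Γ^a_{ac} F^{cb} + Γ^b_{ac} F^{ac}` (the covariant divergence
`∇_a(∇^a X^b − ∇^b X^a)`), one has `∂_b (s J^b) = 0` on `U` for every smooth vector field `X`,
independently of any field equations. -/
theorem komar_current_conserved_off_shell
    (m : ℕ) (hm : 1 ≤ m)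
    (U : Set (Fin m → ℝ)) (hU : IsOpen U)
    (g : (Fin m → ℝ) → Matrix (Fin m) (Fin m) ℝ)
    (hgsm : ∀ a b, ContDiffOn ℝ (⊤ : ℕ∞) (fun x => g x a b) U)
    (hgsym : ∀ x ∈ U, (g x).IsSymm)
    (hginv : ∀ x ∈ U, IsUnit (g x).det)
    (X : (Fin m → ℝ) → Fin m → ℝ)
    (hX : ∀ b, ContDiffOn ℝ (⊤ : ℕ∞) (fun x => X x b) U) :
    let gi : (Fin m → ℝ) → Matrix (Fin m) (Fin m) ℝ := fun x => (g x)⁻¹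
    let s : (Fin m → ℝ) → ℝ := fun x => Real.sqrt |(g x).det|
    let Γ : (Fin m → ℝ) → Fin m → Fin m → Fin m → ℝ := fun x c a b =>
      (1 / 2) * ∑ d, gi x c d *
        (pd (fun t => g t b d) a x + pd (fun t => g t a d) b x - pd (fun t => g t a b) d x)
    let covX : (Fin m → ℝ) → Fin m → Fin m → ℝ := fun x a b =>
      pd (fun t => X t b) a x + ∑ c, Γ x b a c * X x c
    let F : (Fin m → ℝ) → Fin m → Fin m → ℝ := fun x a b =>
      (∑ c, gi x a c * covX x c b) - ∑ c, gi x b c * covX x c a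
    let J : (Fin m → ℝ) → Fin m → ℝ := fun x b =>
      (∑ a, pd (fun t => F t a b) a x)
        + (∑ a, ∑ c, Γ x a a c * F x c b)
        + (∑ a, ∑ c, Γ x b a c * F x a c)
    ∀ x ∈ U, (∑ b, pd (fun t => s t * J t b) b x) = 0 := by
  intro gi s Γ covX F J
  classical
  -- definitional equations for the `let`-bound functions
  have hΓ_def : ∀ y (c a b : Fin m), Γ y c a b = (1 / 2) * ∑ d, gi y c d *
      (pd (fun t => g t b d) a y + pd (fun t => g t a d) b y - pd (fun t => g t a b) d y) :=
    fun _ _ _ _ => rfl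
  have hF_def : ∀ y (a b : Fin m), F y a b
      = (∑ c, gi y a c * covX y c b) - ∑ c, gi y b c * covX y c a := fun _ _ _ => rfl
  have hJ_def : ∀ y (b : Fin m), J y b = (∑ a, pd (fun t => F t a b) a y)
      + (∑ a, ∑ c, Γ y a a c * F y c b) + (∑ a, ∑ c, Γ y b a c * F y a c) := fun _ _ => rfl
  -- basic smoothness and nondegeneracy facts
  have hgsm' : ∀ a b, ContDiffOn ℝ ∞ (fun x => g x a b) U := fun a b => (hgsm a b).of_le (by simp)
  have hX' : ∀ b, ContDiffOn ℝ ∞ (fun x => X x b) U := fun b => (hX b).of_le (by simp)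
  have hdet : ∀ y ∈ U, (g y).det ≠ 0 := fun y hy => (hginv y hy).ne_zero
  have hDsm : ContDiffOn ℝ ∞ (fun y => (g y).det) U := contDiffOn_det hgsm'
  have hgi_entry : ∀ y (a b : Fin m), gi y a b = ((g y).det)⁻¹ * (g y).adjugate a b := by
    intro y a b
    show (g y)⁻¹ a b = _
    rw [Matrix.inv_def, Matrix.smul_apply, Ring.inverse_eq_inv, smul_eq_mul]
  have hgism : ∀ a b : Fin m, ContDiffOn ℝ ∞ (fun y => gi y a b) U := by
    intro a b
    refine ((hDsm.inv hdet).mul (contDiffOn_adjugate hgsm' a b)).congr ?_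
    intro y hy
    exact hgi_entry y a b
  have hadj_eq : ∀ y ∈ U, ∀ (a b : Fin m), (g y).adjugate a b = (g y).det * gi y a b := by
    intro y hy a b
    rw [hgi_entry y a b]
    field_simp [hdet y hy]
  have hgsy : ∀ y ∈ U, ∀ (a b : Fin m), g y a b = g y b a :=
    fun y hy a b => (hgsym y hy).apply b a
  have hgisy : ∀ y ∈ U, ∀ (a b : Fin m), gi y a b = gi y b a := by
    intro y hy a b
    have hsy : (g y)ᵀ = g y := hgsym y hy
    have h1 : (g y)⁻¹ᵀ = (g y)⁻¹ := by
      rw [Matrix.transpose_nonsing_inv, hsy]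
    show (g y)⁻¹ a b = (g y)⁻¹ b a
    conv_lhs => rw [← h1]
    rfl
  have pdgsy : ∀ y ∈ U, ∀ (a b d : Fin m),
      pd (fun t => g t a b) d y = pd (fun t => g t b a) d y := by
    intro y hy a b d
    exact pd_congr_on hU (fun t ht => hgsy t ht a b) hy d
  -- smoothness of the composite objects
  have hΓsm : ∀ c a b : Fin m, ContDiffOn ℝ ∞ (fun y => Γ y c a b) U := by
    intro c a b
    have hbody : ContDiffOn ℝ ∞ (fun y => (1 / 2 : ℝ) * ∑ d, gi y c d *
        (pd (fun t => g t b d) a y + pd (fun t => g t a d) b y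
          - pd (fun t => g t a b) d y)) U :=
      contDiffOn_const.mul (ContDiffOn.sum fun d _ => (hgism c d).mul
        (((contDiffOn_pd hU (hgsm' b d) a).add (contDiffOn_pd hU (hgsm' a d) b)).sub
          (contDiffOn_pd hU (hgsm' a b) d)))
    exact hbody.congr fun y hy => hΓ_def y c a b
  have hcovsm : ∀ a b : Fin m, ContDiffOn ℝ ∞ (fun y => covX y a b) U := by
    intro a b
    have hbody : ContDiffOn ℝ ∞
        (fun y => pd (fun t => X t b) a y + ∑ c, Γ y b a c * X y c) U :=
      (contDiffOn_pd hU (hX' b) a).add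
        (ContDiffOn.sum fun c _ => (hΓsm b a c).mul (hX' c))
    exact hbody.congr fun y hy => rfl
  have hFsm : ∀ a b : Fin m, ContDiffOn ℝ ∞ (fun y => F y a b) U := by
    intro a b
    have hbody : ContDiffOn ℝ ∞
        (fun y => (∑ c, gi y a c * covX y c b) - ∑ c, gi y b c * covX y c a) U :=
      (ContDiffOn.sum fun c _ => (hgism a c).mul (hcovsm c b)).sub
        (ContDiffOn.sum fun c _ => (hgism b c).mul (hcovsm c a))
    exact hbody.congr fun y hy => hF_def y a b
  have hssm : ContDiffOn ℝ ∞ s U := by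
    intro y hy
    have hDc : ContDiffAt ℝ ∞ (fun t => (g t).det) y := (hDsm y hy).contDiffAt (hU.mem_nhds hy)
    rcases (hdet y hy).lt_or_gt with hneg | hpos
    · have hev : ∀ᶠ t in nhds y, (g t).det ∈ Set.Iio (0:ℝ) :=
        hDc.continuousAt.preimage_mem_nhds (Iio_mem_nhds hneg)
      have h1 : ContDiffAt ℝ ∞ (fun t => Real.sqrt (-(g t).det)) y :=
        ContDiffAt.sqrt hDc.neg (by simp only [neg_ne_zero]; exact hdet y hy)
      have h2 : ContDiffAt ℝ ∞ s y := by
        refine h1.congr_of_eventuallyEq ?_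
        filter_upwards [hev] with t ht
        show Real.sqrt |(g t).det| = Real.sqrt (-(g t).det)
        rw [abs_of_neg ht]
      exact h2.contDiffWithinAt
    · have hev : ∀ᶠ t in nhds y, (g t).det ∈ Set.Ioi (0:ℝ) :=
        hDc.continuousAt.preimage_mem_nhds (Ioi_mem_nhds hpos)
      have h1 : ContDiffAt ℝ ∞ (fun t => Real.sqrt ((g t).det)) y :=
        ContDiffAt.sqrt hDc (hdet y hy)
      have h2 : ContDiffAt ℝ ∞ s y := by
        refine h1.congr_of_eventuallyEq ?_
        filter_upwards [hev] with t ht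
        show Real.sqrt |(g t).det| = Real.sqrt ((g t).det)
        rw [abs_of_pos ht]
      exact h2.contDiffWithinAt
  -- key identity B : s ⬝ (contracted Christoffel) = derivative of s
  have hB : ∀ y ∈ U, ∀ c : Fin m, s y * ∑ a, Γ y a a c = pd s c y := by
    intro y hy c
    have hT13 : (∑ a, ∑ d, gi y a d * pd (fun t => g t a c) d y)
        = ∑ a, ∑ d, gi y a d * pd (fun t => g t c d) a y := by
      rw [Finset.sum_comm]
      refine Finset.sum_congr rfl fun a _ => Finset.sum_congr rfl fun d _ => ?_
      rw [hgisy y hy d a, pdgsy y hy d c a]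
    have hsum_Γ : ∑ a, Γ y a a c
        = (1/2) * ∑ a, ∑ d, gi y a d * pd (fun t => g t a d) c y := by
      have e1 : ∑ a, Γ y a a c = ∑ a, (1 / 2 : ℝ) * ∑ d, gi y a d *
          (pd (fun t => g t c d) a y + pd (fun t => g t a d) c y
            - pd (fun t => g t a c) d y) :=
        Finset.sum_congr rfl fun a _ => hΓ_def y a a c
      have e2 : ∑ a, ∑ d, gi y a d * (pd (fun t => g t c d) a y
          + pd (fun t => g t a d) c y - pd (fun t => g t a c) d y)
          = (∑ a, ∑ d, gi y a d * pd (fun t => g t c d) a y)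
            + (∑ a, ∑ d, gi y a d * pd (fun t => g t a d) c y)
            - ∑ a, ∑ d, gi y a d * pd (fun t => g t a c) d y := by
        simp only [mul_add, mul_sub, Finset.sum_add_distrib, Finset.sum_sub_distrib]
      rw [e1, ← Finset.mul_sum, e2, hT13]
      ring
    have hjac : pd (fun t => (g t).det) c y
        = (g y).det * ∑ a, ∑ d, gi y a d * pd (fun t => g t a d) c y := by
      rw [pd_det hU hgsm' hy c, Finset.mul_sum]
      refine Finset.sum_congr rfl fun a _ => ?_
      rw [Finset.mul_sum]
      refine Finset.sum_congr rfl fun d _ => ?_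
      rw [hadj_eq y hy d a, hgisy y hy d a]
      ring
    have hpds : pd s c y = s y / (2 * (g y).det) * pd (fun t => (g t).det) c y :=
      pd_sqrt_abs (diffAt hU hDsm hy) (hdet y hy) c
    rw [hsum_Γ, hpds, hjac]
    have h0 := hdet y hy
    field_simp
  -- antisymmetry of F and symmetry of Γ kill the last term of J
  have hFas : ∀ y (a b : Fin m), F y a b = -(F y b a) := by
    intro y a b
    rw [hF_def, hF_def, neg_sub]
  have hΓsy : ∀ y ∈ U, ∀ (b a c : Fin m), Γ y b a c = Γ y b c a := by
    intro y hy b a c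
    rw [hΓ_def, hΓ_def]
    congr 1
    refine Finset.sum_congr rfl fun d _ => ?_
    rw [pdgsy y hy a c d]
    ring
  have hA : ∀ y ∈ U, ∀ b : Fin m, (∑ a, ∑ c, Γ y b a c * F y a c) = 0 := by
    intro y hy b
    have h1 : (∑ a, ∑ c, Γ y b a c * F y a c) = -∑ a, ∑ c, Γ y b a c * F y a c := by
      conv_lhs => rw [Finset.sum_comm]
      rw [← Finset.sum_neg_distrib]
      refine Finset.sum_congr rfl fun a _ => ?_
      rw [← Finset.sum_neg_distrib]
      refine Finset.sum_congr rfl fun c _ => ?_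
      rw [hΓsy y hy b c a, hFas y c a]
      ring
    linarith
  -- step 1 : s ⬝ J^b = ∑_a ∂_a (s F^{ab}) on U
  have hKsm : ∀ a b : Fin m, ContDiffOn ℝ ∞ (fun t => s t * F t a b) U :=
    fun a b => hssm.mul (hFsm a b)
  have hstep1 : ∀ y ∈ U, ∀ b : Fin m,
      s y * J y b = ∑ a, pd (fun t => s t * F t a b) a y := by
    intro y hy b
    have hexp : ∀ a : Fin m, pd (fun t => s t * F t a b) a y
        = pd s a y * F y a b + s y * pd (fun t => F t a b) a y :=
      fun a => pd_mul (diffAt hU hssm hy) (diffAt hU (hFsm a b) hy) a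
    rw [hJ_def, hA y hy b, add_zero]
    have e1 : ∑ a, pd (fun t => s t * F t a b) a y
        = (∑ a, pd s a y * F y a b) + ∑ a, s y * pd (fun t => F t a b) a y := by
      rw [← Finset.sum_add_distrib]
      exact Finset.sum_congr rfl fun a _ => hexp a
    rw [e1]
    have e2 : s y * ∑ a, ∑ c, Γ y a a c * F y c b = ∑ c, pd s c y * F y c b := by
      conv_lhs => rw [Finset.sum_comm]
      rw [Finset.mul_sum]
      refine Finset.sum_congr rfl fun c _ => ?_
      rw [← Finset.sum_mul, ← mul_assoc, hB y hy c]
    rw [mul_add, e2, Finset.mul_sum]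
    exact add_comm _ _
  -- conclusion via symmetry of second derivatives
  intro x hx
  have key : ∀ b : Fin m, pd (fun t => s t * J t b) b x
      = ∑ a, pd (fun y => pd (fun t => s t * F t a b) a y) b x := by
    intro b
    rw [pd_congr_on hU (fun y hy => hstep1 y hy b) hx b]
    exact pd_sum Finset.univ
      (fun a _ => diffAt hU (contDiffOn_pd hU (hKsm a b) a) hx) b
  have hT : (∑ b, ∑ a, pd (fun y => pd (fun t => s t * F t a b) a y) b x)
      = -∑ b, ∑ a, pd (fun y => pd (fun t => s t * F t a b) a y) b x := by
    conv_lhs => rw [Finset.sum_comm]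
    rw [← Finset.sum_neg_distrib]
    refine Finset.sum_congr rfl fun b _ => ?_
    rw [← Finset.sum_neg_distrib]
    refine Finset.sum_congr rfl fun a _ => ?_
    -- goal : pd (fun y => pd (fun t => s t * F t b a) b y) a x
    --      = -(pd (fun y => pd (fun t => s t * F t a b) a y) b x)
    have hpt : ∀ y, pd (fun t => s t * F t b a) b y
        = -(pd (fun t => s t * F t a b) b y) := by
      intro y
      have hK : (fun t => s t * F t b a) = fun t => -(s t * F t a b) := by
        funext t
        rw [hFas t a b]
        ring
      rw [hK]
      exact pd_neg b
    rw [show (fun y => pd (fun t => s t * F t b a) b y)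
        = (fun y => -(pd (fun t => s t * F t a b) b y)) from funext hpt]
    rw [pd_neg a]
    rw [pd_swap hU (hKsm a b) hx b a]
  have hfinal : (∑ b, pd (fun t => s t * J t b) b x)
      = ∑ b, ∑ a, pd (fun y => pd (fun t => s t * F t a b) a y) b x :=
    Finset.sum_congr rfl fun b _ => key b
  rw [hfinal]
  linarith [hT]
end
end
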